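/- For every m ≥ 0, QSym_m (quasisymmetric polynomials in the variables α_1, …, α_m), together with the projections π_{m,n}: QSym_m → ℤ[α_1, …, α_n] for n ≤ m (setting α_i ↦ 0 for i > n), is the inverse limit of the polynomial rings ℤ[α_1, …, α_n] for n ≤ m in the category of graded rings: for every ℕ-graded commutative ring R^• and every family of graded ring homomorphisms f_n: R^• → ℤ[α_1, …, α_n], 0 ≤ n ≤ m, satisfying g_i^n ∘ f_{n+1} = f_n for all 0 ≤ n < m and 1 ≤ i ≤ n+1, there exists a unique graded ring homomorphism ψ: R^• → QSym_m with π_{m,n} ∘ ψ = f_n for all n ≤ m. Here g_i^n: ℤ[α_1, …, α_{n+1}] → ℤ[α_1, …, α_n] is the homomorphism sending α_i ↦ 0, α_j ↦ α_j for j < i, and α_j ↦ α_{j−1} for j > i. -/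

import Mathlib

/-!
STATEMENT 13: For every `m ≥ 0`, `QSym_m` (quasisymmetric polynomials in `α_1, …, α_m`),
together with the truncation projections `π_{m,n} : QSym_m → ℤ[α_1, …, α_n]` for `n ≤ m`, is
the inverse limit of the polynomial rings `ℤ[α_1, …, α_n]`, `n ≤ m` (with the connecting maps
`g_i^n` deleting one variable), in the category of graded rings.
-/

noncomputable section

/-- The exponent vector of the monomial `α_{i 0}^{l 0} ⋯ α_{i (ℓ-1)}^{l (ℓ-1)}`. -/
def qsMonom {ι : Type*} (l : List ℕ+) (i : Fin l.length → ι) : ι →₀ ℕ :=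
  ∑ k : Fin l.length, Finsupp.single (i k) (l.get k : ℕ)

/-- A polynomial in `m` ordered variables is quasisymmetric if for every list `l` of positive
integers and every two strictly increasing tuples of variables, the corresponding coefficients
agree. -/
def IsQSymPoly {m : ℕ} (f : MvPolynomial (Fin m) ℤ) : Prop :=
  ∀ (l : List ℕ+) (i j : Fin l.length → Fin m), StrictMono i → StrictMono j →
    MvPolynomial.coeff (qsMonom l i) f = MvPolynomial.coeff (qsMonom l j) f

/-- `g_i^n : ℤ[α_1, …, α_{n+1}] → ℤ[α_1, …, α_n]`: the homomorphism sending `α_i ↦ 0`,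
`α_j ↦ α_j` for `j < i`, and `α_j ↦ α_{j−1}` for `j > i`. -/
def gmap (n : ℕ) (i : Fin (n + 1)) :
    MvPolynomial (Fin (n + 1)) ℤ →+* MvPolynomial (Fin n) ℤ :=
  MvPolynomial.eval₂Hom (MvPolynomial.C : ℤ →+* MvPolynomial (Fin n) ℤ)
    (fun j : Fin (n + 1) =>
      if _ : (j : ℕ) < (i : ℕ) then MvPolynomial.X ⟨j, by have := i.isLt; omega⟩
      else if _ : (j : ℕ) = (i : ℕ) then 0
      else MvPolynomial.X ⟨(j : ℕ) - 1, by have := j.isLt; omega⟩)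

/-!
`π_{m,n}` is restriction along `Fin.castLE : Fin n → Fin m` (`MvPolynomial.killCompl`), and each
`g_i^n` is restriction along `i.succAbove`. A polynomial is quasisymmetric exactly when its
restrictions along any two strictly increasing embeddings `Fin r → Fin m` agree; this exhibits
`QSym_m` as an intersection of equalizers of ring homomorphisms, hence a subring. Every strictly
increasing embedding is a composite of maps `succAbove`, so a compatible family `(f_n)` satisfies
`f_r = (restriction along u) ∘ f_n` for all such `u`. Hence `f_m` lands in `QSym_m` and is the
required `ψ`; uniqueness holds because `π_{m,m}` is the inclusion.
-/

open MvPolynomial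

lemma mapDomain_qsMonom {ι κ : Type*} (u : ι → κ) (l : List ℕ+)
    (i : Fin l.length → ι) : (qsMonom l i).mapDomain u = qsMonom l (u ∘ i) := by
  simp only [qsMonom, Finsupp.mapDomain_finsetSum, Finsupp.mapDomain_single, Function.comp_apply]

/-- Read the composition `l` off the nonzero exponents of `e`, in increasing order of variable. -/
lemma exists_qsMonom_eq {ι : Type*} [LinearOrder ι] (e : ι →₀ ℕ) :
    ∃ (l : List ℕ+) (i : Fin l.length → ι), StrictMono i ∧ qsMonom l i = e := by
  set σ := e.support.orderEmbOfFin rfl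
  let g : Fin e.support.card → ℕ+ := fun k =>
    ⟨e (σ k), Nat.pos_of_ne_zero (Finsupp.mem_support_iff.mp (e.support.orderEmbOfFin_mem rfl k))⟩
  have hlen : (List.ofFn g).length = e.support.card := List.length_ofFn
  refine ⟨List.ofFn g, σ ∘ Fin.cast hlen, σ.strictMono.comp fun _ _ h => h, ?_⟩
  calc qsMonom (List.ofFn g) (σ ∘ Fin.cast hlen)
      = ∑ k, Finsupp.single (σ k) (e (σ k)) :=
        Fintype.sum_equiv (finCongr hlen) _ _ fun k => by
          rw [Function.comp_apply, List.get_ofFn]; rfl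
    _ = ∑ x ∈ Finset.univ.map σ.toEmbedding, Finsupp.single x (e x) :=
        (Finset.sum_map Finset.univ σ.toEmbedding fun x => Finsupp.single x (e x)).symm
    _ = ∑ x ∈ e.support, Finsupp.single x (e x) := by simp [σ]
    _ = e := e.sum_single

namespace MvPolynomial

lemma IsHomogeneous.killCompl {R σ τ : Type*} [CommSemiring R] {u : σ → τ}
    (hu : Function.Injective u) {p : MvPolynomial τ R} {n : ℕ} (hp : p.IsHomogeneous n) :
    (killCompl hu p).IsHomogeneous n := by
  intro d hd
  rw [coeff_killCompl] at hd
  simpa [Finsupp.weight_apply, Finsupp.sum_mapDomain_index, add_smul] using hp hd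

lemma killCompl_killCompl {R ρ σ τ : Type*} [CommSemiring R] {u : ρ → σ} {v : σ → τ}
    (hu : Function.Injective u) (hv : Function.Injective v) (p : MvPolynomial τ R) :
    killCompl hu (killCompl hv p) = killCompl (hv.comp hu) p := by
  ext e
  simp only [coeff_killCompl, ← Finsupp.mapDomain_comp]

lemma killCompl_X_apply {R σ τ : Type*} [CommSemiring R] {u : σ → τ}
    (hu : Function.Injective u) (k : σ) : killCompl hu (X (u k) : MvPolynomial τ R) = X k := by
  simpa using killCompl_rename_app hu (X k : MvPolynomial σ R)

lemma killCompl_of_strictMono_self {R : Type*} [CommSemiring R] {n : ℕ} {u : Fin n → Fin n}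
    (hu : StrictMono u) (p : MvPolynomial (Fin n) R) : killCompl hu.injective p = p := by
  obtain rfl : u = id := hu.eq_id
  ext e
  simp [coeff_killCompl]

end MvPolynomial

lemma gmap_eq_killCompl (n : ℕ) (i : Fin (n + 1)) :
    gmap n i = (killCompl (R := ℤ) (Fin.succAbove_right_injective (p := i)) :
      MvPolynomial (Fin (n + 1)) ℤ →+* MvPolynomial (Fin n) ℤ) := by
  refine MvPolynomial.ringHom_ext (fun c => by simp [gmap]) fun j => ?_
  rcases Fin.eq_self_or_eq_succAbove i j with rfl | ⟨k, rfl⟩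
  · simp [gmap, killCompl]
  · rw [RingHom.coe_coe, killCompl_X_apply]
    simp only [gmap, coe_eval₂Hom, eval₂_X]
    rcases lt_or_ge k.castSucc i with h | h
    · rw [Fin.succAbove_of_castSucc_lt _ _ h, dif_pos (show (k.castSucc : ℕ) < i from h)]
      rfl
    · have hik : (i : ℕ) ≤ k := h
      rw [Fin.succAbove_of_le_castSucc _ _ h, dif_neg (by simp; omega), dif_neg (by simp; omega)]
      simp

lemma StrictMono.exists_eq_succAbove_comp {r n : ℕ} {u : Fin r → Fin (n + 1)}
    (hu : StrictMono u) (hr : r < n + 1) :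
    ∃ (t : Fin (n + 1)) (u' : Fin r → Fin n), StrictMono u' ∧ u = t.succAbove ∘ u' := by
  obtain ⟨t, ht⟩ : ∃ t, t ∉ Set.range u := by
    by_contra! h
    exact hr.not_ge (Fin.le_of_surjective u fun t => h t)
  choose u' hu' using fun k =>
    Fin.exists_succAbove_eq (ne_of_mem_of_not_mem (Set.mem_range_self k) ht)
  refine ⟨t, u', fun a b hab => ?_, funext fun k => (hu' k).symm⟩
  rw [← (Fin.strictMono_succAbove t).lt_iff_lt, hu', hu']
  exact hu hab

lemma killCompl_eq_of_gmap_eq {m : ℕ} (p : (n : ℕ) → n ≤ m → MvPolynomial (Fin n) ℤ)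
    (hp : ∀ (n : ℕ) (h : n + 1 ≤ m) (i : Fin (n + 1)),
      gmap n i (p (n + 1) h) = p n (Nat.le_of_succ_le h))
    {n r : ℕ} (hn : n ≤ m) (hr : r ≤ m) {u : Fin r → Fin n} (hu : StrictMono u) :
    killCompl hu.injective (p n hn) = p r hr := by
  induction n generalizing r with
  | zero =>
    obtain rfl : r = 0 := Nat.le_zero.mp (Fin.le_of_injective u hu.injective)
    exact killCompl_of_strictMono_self hu _
  | succ n ih =>
    rcases (Fin.le_of_injective u hu.injective).eq_or_lt with rfl | hlt
    · exact killCompl_of_strictMono_self hu _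
    obtain ⟨t, u', hu', rfl⟩ := hu.exists_eq_succAbove_comp hlt
    have hdelete : killCompl (Fin.succAbove_right_injective (p := t)) (p (n + 1) hn) =
        p n (Nat.le_of_succ_le hn) := by
      simpa [gmap_eq_killCompl] using hp n hn t
    rw [← killCompl_killCompl hu'.injective Fin.succAbove_right_injective, hdelete]
    exact ih _ hr hu'

def qsymSubring (R : Type*) [CommRing R] (m : ℕ) : Subring (MvPolynomial (Fin m) R) :=
  ⨅ (r : ℕ) (u : {u : Fin r → Fin m // StrictMono u}) (v : {v : Fin r → Fin m // StrictMono v}),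
    RingHom.eqLocus (killCompl u.2.injective).toRingHom (killCompl v.2.injective).toRingHom

lemma mem_qsymSubring_iff {R : Type*} [CommRing R] {m : ℕ} {f : MvPolynomial (Fin m) R} :
    f ∈ qsymSubring R m ↔ ∀ (r : ℕ) (u : Fin r → Fin m) (hu : StrictMono u)
      (v : Fin r → Fin m) (hv : StrictMono v),
      killCompl hu.injective f = killCompl hv.injective f := by
  simp [qsymSubring, Subring.mem_iInf]

lemma isQSymPoly_iff_mem_qsymSubring {m : ℕ} {f : MvPolynomial (Fin m) ℤ} :
    IsQSymPoly f ↔ f ∈ qsymSubring ℤ m := by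
  rw [mem_qsymSubring_iff]
  constructor
  · intro hf r u hu v hv
    ext e
    obtain ⟨l, i, hi, rfl⟩ := exists_qsMonom_eq e
    simpa only [coeff_killCompl, mapDomain_qsMonom] using
      hf l _ _ (hu.comp hi) (hv.comp hi)
  · intro hf l i j hi hj
    simpa [coeff_killCompl, mapDomain_qsMonom] using
      congrArg (coeff (qsMonom l id)) (hf _ i hi j hj)

theorem qsym_m_is_inverse_limit_of_graded_rings (m : ℕ) :
    ∃ (Q : Subring (MvPolynomial (Fin m) ℤ))
      (_ : (Q : Set (MvPolynomial (Fin m) ℤ)) = {f | IsQSymPoly f})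
      (π : (n : ℕ) → n ≤ m → ↥Q →+* MvPolynomial (Fin n) ℤ),
      -- `π_{m,n}` is the truncation keeping only the variables `α_1, …, α_n`
      (∀ (n : ℕ) (h : n ≤ m) (f : Q) (d : Fin n →₀ ℕ),
        MvPolynomial.coeff d (π n h f) =
          MvPolynomial.coeff (Finsupp.mapDomain (Fin.castLE h) d) f.val) ∧
      -- `π_{m,n}` is a graded ring homomorphism
      (∀ (n : ℕ) (h : n ≤ m) (dg : ℕ) (f : Q),
        (f.val.IsHomogeneous dg) → (π n h f).IsHomogeneous dg) ∧
      -- universal property of the inverse limit in the category of graded rings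
      (∀ (R : Type) [CommRing R] (𝒜 : ℕ → AddSubgroup R) [GradedRing 𝒜]
        (fn : (n : ℕ) → n ≤ m → R →+* MvPolynomial (Fin n) ℤ),
        (∀ (n : ℕ) (h : n ≤ m) (dg : ℕ) (x : R), x ∈ 𝒜 dg → (fn n h x).IsHomogeneous dg) →
        (∀ (n : ℕ) (h : n + 1 ≤ m) (i : Fin (n + 1)),
          (gmap n i).comp (fn (n + 1) h) = fn n (Nat.le_of_succ_le h)) →
        ∃! ψ : R →+* ↥Q,
          (∀ (dg : ℕ) (x : R), x ∈ 𝒜 dg → (ψ x).val.IsHomogeneous dg) ∧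
          (∀ (n : ℕ) (h : n ≤ m), (π n h).comp ψ = fn n h)) := by
  refine ⟨qsymSubring ℤ m, Set.ext fun _ => isQSymPoly_iff_mem_qsymSubring.symm,
    fun n h => (killCompl (R := ℤ) (Fin.castLE_injective h) : _ →+* _).comp
      (qsymSubring ℤ m).subtype,
    fun n h f d => coeff_killCompl _, fun n h dg f hf => hf.killCompl _, ?_⟩
  intro R _ 𝒜 _ fn hfn hcompat
  have hrestrict (x : R) {n r : ℕ} (hn : n ≤ m) (hr : r ≤ m) {u : Fin r → Fin n}
      (hu : StrictMono u) : killCompl hu.injective (fn n hn x) = fn r hr x :=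
    killCompl_eq_of_gmap_eq (fun n h => fn n h x)
      (fun n h i => RingHom.congr_fun (hcompat n h i) x) hn hr hu
  have hmem (x : R) : fn m le_rfl x ∈ qsymSubring ℤ m :=
    mem_qsymSubring_iff.mpr fun r u hu v hv =>
      (hrestrict x le_rfl (Fin.le_of_injective u hu.injective) hu).trans
        (hrestrict x le_rfl _ hv).symm
  refine ⟨(fn m le_rfl).codRestrict _ hmem, ⟨hfn m le_rfl,
    fun n h => RingHom.ext fun x => hrestrict x le_rfl h (Fin.strictMono_castLE h)⟩, ?_⟩
  rintro ψ ⟨-, hψ⟩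
  refine RingHom.ext fun x => Subtype.ext ?_
  exact (killCompl_of_strictMono_self (Fin.strictMono_castLE le_rfl) _).symm.trans
    (RingHom.congr_fun (hψ m le_rfl) x)

end
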